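/- Assume f is L-smooth, ζ-quasar-convex with respect to x*, and g satisfies ER(ρ) with noise σ². For step sizes 0 < γ_t < ζ/(2ρ + L), the iterates of SGD satisfy: min over t < k of E[f(x^t) - f(x*)] ≤ [‖x^0 - x*‖²/2 + σ²∑_{t<k} γ_t²] / ∑_{t<k} γ_t(ζ - γ_t(2ρ + L)). -/

import Mathlib

/-!
The Lyapunov function is the expected squared distance `E‖x^t - x*‖²`. Expanding one SGD step,
the cross term is `-2γ_t⟨∇f(x^t), x^t - x*⟩ ≤ -2γ_t ζ (f(x^t) - f*)` by quasar-convexity, and the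
second moment of the gradient estimate is at most `2(2ρ + L)(f(x^t) - f*) + 2σ²`: the variance
part is controlled by ER together with `σ²`, and the mean part by smoothness, `‖∇f‖² ≤ 2L(f - f*)`.
Hence `E‖x^{t+1} - x*‖² ≤ E‖x^t - x*‖² - 2γ_t(ζ - γ_t(2ρ + L)) E[f(x^t) - f*] + 2γ_t²σ²`;
summing over `t < k` telescopes, and the minimum is at most the weighted average.
-/

open scoped RealInnerProductSpace
open Finset

theorem exists_lt_le_div_of_descent {R F c b : ℕ → ℝ} (hR : ∀ t, 0 ≤ R t) (hc : ∀ t, 0 < c t)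
    (hstep : ∀ t, R (t + 1) ≤ R t - 2 * c t * F t + 2 * b t) {k : ℕ} (hk : 0 < k) :
    ∃ t < k, F t ≤ (R 0 / 2 + ∑ t ∈ range k, b t) / ∑ t ∈ range k, c t := by
  have hne : (range k).Nonempty := nonempty_range_iff.mpr hk.ne'
  obtain ⟨t₀, ht₀, hmin⟩ := exists_min_image (range k) F hne
  refine ⟨t₀, mem_range.mp ht₀, ?_⟩
  rw [le_div_iff₀ (sum_pos (fun t _ => hc t) hne)]
  have htelescope : ∑ t ∈ range k, 2 * (c t * F t) ≤ R 0 + 2 * ∑ t ∈ range k, b t := by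
    calc ∑ t ∈ range k, 2 * (c t * F t)
        ≤ ∑ t ∈ range k, ((R t - R (t + 1)) + 2 * b t) :=
          sum_le_sum fun t _ => by linarith [hstep t]
      _ = R 0 - R k + 2 * ∑ t ∈ range k, b t := by
          rw [sum_add_distrib, sum_range_sub', mul_sum]
      _ ≤ R 0 + 2 * ∑ t ∈ range k, b t := by linarith [hR k]
  calc F t₀ * ∑ t ∈ range k, c t
      = ∑ t ∈ range k, c t * F t₀ := by rw [mul_sum]; exact sum_congr rfl fun t _ => mul_comm _ _
    _ ≤ ∑ t ∈ range k, c t * F t :=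
        sum_le_sum fun t ht => mul_le_mul_of_nonneg_left (hmin t ht) (hc t).le
    _ ≤ R 0 / 2 + ∑ t ∈ range k, b t := by rw [← mul_sum] at htelescope; linarith

section Smooth

variable {E : Type*} [NormedAddCommGroup E] [InnerProductSpace ℝ E]
  {f : E → ℝ} {gradf : E → E} {L ζ : ℝ} {xstar : E}

/-- The descent lemma applied to the gradient step `y - L⁻¹ ∇f(y)`. -/
theorem norm_sq_grad_le_of_smooth (hL : 0 < L)
    (hsmooth : ∀ x z : E, f z ≤ f x + ⟪gradf x, z - x⟫ + L / 2 * ‖z - x‖ ^ 2)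
    (hmin : ∀ x, f xstar ≤ f x) (y : E) :
    ‖gradf y‖ ^ 2 ≤ 2 * L * (f y - f xstar) := by
  have hstep := hsmooth y (y - L⁻¹ • gradf y)
  rw [sub_sub_cancel_left, inner_neg_right, real_inner_smul_right, real_inner_self_eq_norm_sq,
    norm_neg, norm_smul, Real.norm_of_nonneg (inv_nonneg.mpr hL.le)] at hstep
  have hdecrease : f xstar ≤ f y - ‖gradf y‖ ^ 2 / (2 * L) := by
    calc f xstar ≤ f (y - L⁻¹ • gradf y) := hmin _
      _ ≤ _ := hstep
      _ = f y - ‖gradf y‖ ^ 2 / (2 * L) := by field_simp; ring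
  rw [le_sub_comm, div_le_iff₀ (by positivity)] at hdecrease
  linarith

theorem grad_eq_zero_of_smooth_of_forall_le (hL : 0 < L)
    (hsmooth : ∀ x z : E, f z ≤ f x + ⟪gradf x, z - x⟫ + L / 2 * ‖z - x‖ ^ 2)
    (hmin : ∀ x, f xstar ≤ f x) : gradf xstar = 0 := by
  have h := norm_sq_grad_le_of_smooth hL hsmooth hmin xstar
  rw [sub_self, mul_zero] at h
  simpa using h

theorem mul_sub_le_inner_of_quasarConvex (hζ : 0 < ζ) {y : E}
    (hquasar : f xstar ≥ f y + (1 / ζ) * ⟪gradf y, xstar - y⟫) :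
    ζ * (f y - f xstar) ≤ ⟪gradf y, y - xstar⟫ := by
  have h := mul_le_mul_of_nonneg_left hquasar hζ.le
  rw [mul_add, ← mul_assoc, mul_one_div_cancel hζ.ne', one_mul] at h
  rw [← neg_sub xstar y, inner_neg_right]
  linarith

end Smooth

section WeightedSum

variable {ι : Type*} [Fintype ι] {p : ι → ℝ} {E : Type*} [NormedAddCommGroup E]

theorem sum_mul_norm_add_sq_le (hp0 : ∀ i, 0 ≤ p i) (u w : ι → E) :
    ∑ i, p i * ‖u i + w i‖ ^ 2 ≤ 2 * ∑ i, p i * ‖u i‖ ^ 2 + 2 * ∑ i, p i * ‖w i‖ ^ 2 := by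
  simp only [mul_sum, ← sum_add_distrib]
  refine sum_le_sum fun i _ => ?_
  have h : ‖u i + w i‖ ^ 2 ≤ 2 * (‖u i‖ ^ 2 + ‖w i‖ ^ 2) :=
    (pow_le_pow_left₀ (norm_nonneg _) (norm_add_le _ _) 2).trans add_sq_le
  linarith [mul_le_mul_of_nonneg_left h (hp0 i)]

variable [InnerProductSpace ℝ E]

theorem sum_mul_norm_sq_eq_sum_mul_norm_sub_sq_add (hp1 : ∑ i, p i = 1) (v : ι → E) :
    ∑ i, p i * ‖v i‖ ^ 2 =
      ∑ i, p i * ‖v i - ∑ j, p j • v j‖ ^ 2 + ‖∑ j, p j • v j‖ ^ 2 := by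
  have hexpand : ∀ i, p i * ‖v i - ∑ j, p j • v j‖ ^ 2 = p i * ‖v i‖ ^ 2 -
      2 * ⟪p i • v i, ∑ j, p j • v j⟫ + p i * ‖∑ j, p j • v j‖ ^ 2 := fun i => by
    rw [norm_sub_sq_real, real_inner_smul_left]; ring
  simp only [hexpand, sum_add_distrib, sum_sub_distrib, ← mul_sum, ← sum_mul, ← sum_inner, hp1,
    real_inner_self_eq_norm_sq]
  ring

theorem sum_mul_norm_sub_smul_sq (hp1 : ∑ i, p i = 1) (a : E) (c : ℝ) (v : ι → E) :
    ∑ i, p i * ‖a - c • v i‖ ^ 2 =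
      ‖a‖ ^ 2 - 2 * c * ⟪∑ i, p i • v i, a⟫ + c ^ 2 * ∑ i, p i * ‖v i‖ ^ 2 := by
  have hexpand : ∀ i, p i * ‖a - c • v i‖ ^ 2 =
      p i * ‖a‖ ^ 2 - 2 * c * ⟪p i • v i, a⟫ + c ^ 2 * (p i * ‖v i‖ ^ 2) := fun i => by
    rw [norm_sub_sq_real, real_inner_smul_right, norm_smul, Real.norm_eq_abs, mul_pow, sq_abs,
      real_inner_smul_left, real_inner_comm]
    ring
  simp only [hexpand, sum_add_distrib, sum_sub_distrib, ← mul_sum, ← sum_mul, ← sum_inner, hp1,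
    one_mul]

end WeightedSum

section SGDStep

variable {ι : Type*} [Fintype ι] {p : ι → ℝ}
  {E : Type*} [NormedAddCommGroup E] [InnerProductSpace ℝ E]
  {f : E → ℝ} {gradf : E → E} {g : ι → E → E} {L ζ ρ σ2 : ℝ} {xstar : E}

theorem sum_mul_norm_sq_le_of_expectedResidual (hp0 : ∀ i, 0 ≤ p i) (hp1 : ∑ i, p i = 1)
    (hgrad0 : gradf xstar = 0) {y : E} (hunbiased : ∑ i, p i • g i y = gradf y)
    (hgrad : ‖gradf y‖ ^ 2 ≤ 2 * L * (f y - f xstar))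
    (hER : ∑ i, p i * ‖g i y - g i xstar - (gradf y - gradf xstar)‖ ^ 2 ≤
        2 * ρ * (f y - f xstar))
    (hσ : ∑ i, p i * ‖g i xstar‖ ^ 2 = σ2) :
    ∑ i, p i * ‖g i y‖ ^ 2 ≤ 2 * (2 * ρ + L) * (f y - f xstar) + 2 * σ2 := by
  have hresidual : ∀ i, g i y - gradf y =
      (g i y - g i xstar - (gradf y - gradf xstar)) + g i xstar := fun i => by
    rw [hgrad0]; abel
  have hvariance := sum_mul_norm_add_sq_le hp0
    (fun i => g i y - g i xstar - (gradf y - gradf xstar)) (fun i => g i xstar)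
  simp only [← hresidual, hσ] at hvariance
  rw [sum_mul_norm_sq_eq_sum_mul_norm_sub_sq_add hp1, hunbiased]
  linarith

theorem sum_mul_norm_sgdStep_sub_sq_le (hp1 : ∑ i, p i = 1) {γ : ℝ} (hγ : 0 ≤ γ) {y : E}
    (hunbiased : ∑ i, p i • g i y = gradf y)
    (hquasar : ζ * (f y - f xstar) ≤ ⟪gradf y, y - xstar⟫)
    (hsecond : ∑ i, p i * ‖g i y‖ ^ 2 ≤ 2 * (2 * ρ + L) * (f y - f xstar) + 2 * σ2) :
    ∑ i, p i * ‖y - γ • g i y - xstar‖ ^ 2 ≤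
      ‖y - xstar‖ ^ 2 - 2 * (γ * (ζ - γ * (2 * ρ + L))) * (f y - f xstar) + 2 * γ ^ 2 * σ2 := by
  simp only [sub_right_comm y _ xstar]
  rw [sum_mul_norm_sub_smul_sq hp1, hunbiased]
  nlinarith [mul_le_mul_of_nonneg_left hsecond (sq_nonneg γ),
    mul_le_mul_of_nonneg_left hquasar (mul_nonneg zero_le_two hγ)]

end SGDStep

section Paths

variable {ι : Type*} [Fintype ι] {p : ι → ℝ}

/-- Expectation over the first `t` indices, drawn independently from `p`. -/
def pathExpect (p : ι → ℝ) (t : ℕ) (F : (Fin t → ι) → ℝ) : ℝ :=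
  ∑ ω : Fin t → ι, (∏ s, p (ω s)) * F ω

theorem pathExpect_const (hp1 : ∑ i, p i = 1) (t : ℕ) (c : ℝ) :
    pathExpect p t (fun _ => c) = c := by
  rw [pathExpect, ← sum_mul, ← Fintype.sum_pow, hp1, one_pow, one_mul]

theorem pathExpect_add (t : ℕ) (F G : (Fin t → ι) → ℝ) :
    pathExpect p t (fun ω => F ω + G ω) = pathExpect p t F + pathExpect p t G := by
  simp only [pathExpect, mul_add, sum_add_distrib]

theorem pathExpect_sub (t : ℕ) (F G : (Fin t → ι) → ℝ) :
    pathExpect p t (fun ω => F ω - G ω) = pathExpect p t F - pathExpect p t G := by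
  simp only [pathExpect, mul_sub, sum_sub_distrib]

theorem pathExpect_const_mul (t : ℕ) (c : ℝ) (F : (Fin t → ι) → ℝ) :
    pathExpect p t (fun ω => c * F ω) = c * pathExpect p t F := by
  simp only [pathExpect, mul_sum, mul_left_comm]

theorem pathExpect_mono (hp0 : ∀ i, 0 ≤ p i) {t : ℕ} {F G : (Fin t → ι) → ℝ}
    (h : ∀ ω, F ω ≤ G ω) : pathExpect p t F ≤ pathExpect p t G :=
  sum_le_sum fun ω _ => mul_le_mul_of_nonneg_left (h ω) (prod_nonneg fun s _ => hp0 (ω s))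

theorem pathExpect_nonneg (hp0 : ∀ i, 0 ≤ p i) {t : ℕ} {F : (Fin t → ι) → ℝ}
    (h : ∀ ω, 0 ≤ F ω) : 0 ≤ pathExpect p t F :=
  sum_nonneg fun ω _ => mul_nonneg (prod_nonneg fun s _ => hp0 (ω s)) (h ω)

theorem pathExpect_succ (t : ℕ) (F : (Fin (t + 1) → ι) → ℝ) :
    pathExpect p (t + 1) F = pathExpect p t (fun ω => ∑ i, p i * F (Fin.snoc ω i)) := by
  rw [pathExpect, ← (Fin.snocEquiv fun _ => ι).sum_comp, Fintype.sum_prod_type, sum_comm]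
  refine sum_congr rfl fun ω _ => ?_
  simp only [Fin.snocEquiv_apply, Fin.prod_univ_castSucc, Fin.snoc_castSucc, Fin.snoc_last,
    mul_sum]
  exact sum_congr rfl fun i _ => by rw [mul_assoc]; rfl

end Paths

section Iterates

variable {ι : Type*} {E : Type*} [Sub E] [SMul ℝ E] {g : ι → E → E} {γ : ℕ → ℝ} {x0 : E}
  {x : ℕ → (ℕ → ι) → E}

theorem sgd_iterate_congr (hx0 : ∀ ω, x 0 ω = x0)
    (hrec : ∀ k ω, x (k + 1) ω = x k ω - γ k • g (ω k) (x k ω)) :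
    ∀ {t : ℕ} {ω ω' : ℕ → ι}, (∀ m < t, ω m = ω' m) → x t ω = x t ω'
  | 0, ω, ω', _ => by rw [hx0, hx0]
  | t + 1, ω, ω', h => by
    rw [hrec, hrec, sgd_iterate_congr hx0 hrec fun m hm => h m (hm.trans t.lt_succ_self),
      h t t.lt_succ_self]

variable [Inhabited ι]

def extendByDefault {t : ℕ} (ω : Fin t → ι) : ℕ → ι :=
  fun m => if h : m < t then ω ⟨m, h⟩ else default

theorem extendByDefault_snoc_of_lt {t m : ℕ} (ω : Fin t → ι) (i : ι) (hm : m < t) :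
    extendByDefault (Fin.snoc ω i : Fin (t + 1) → ι) m = extendByDefault ω m := by
  simp [extendByDefault, Fin.snoc, hm, hm.trans t.lt_succ_self]

theorem extendByDefault_snoc_self {t : ℕ} (ω : Fin t → ι) (i : ι) :
    extendByDefault (Fin.snoc ω i : Fin (t + 1) → ι) t = i := by
  simp [extendByDefault, Fin.snoc]

theorem sgd_iterate_snoc (hx0 : ∀ ω, x 0 ω = x0)
    (hrec : ∀ k ω, x (k + 1) ω = x k ω - γ k • g (ω k) (x k ω)) {t : ℕ} (ω : Fin t → ι) (i : ι) :
    x (t + 1) (extendByDefault (Fin.snoc ω i : Fin (t + 1) → ι)) =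
      x t (extendByDefault ω) - γ t • g i (x t (extendByDefault ω)) := by
  rw [hrec, extendByDefault_snoc_self,
    sgd_iterate_congr hx0 hrec fun m hm => extendByDefault_snoc_of_lt ω i hm]

end Iterates

theorem pathExpect_sgd_norm_sub_sq_succ_le {ι : Type*} [Fintype ι] [Inhabited ι] {p : ι → ℝ}
    {E : Type*} [NormedAddCommGroup E] [Module ℝ E] {f : E → ℝ} {g : ι → E → E} {γ : ℕ → ℝ}
    {xstar x0 : E} {x : ℕ → (ℕ → ι) → E}
    (hp0 : ∀ i, 0 ≤ p i) (hp1 : ∑ i, p i = 1) (hx0 : ∀ ω, x 0 ω = x0)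
    (hrec : ∀ k ω, x (k + 1) ω = x k ω - γ k • g (ω k) (x k ω)) {t : ℕ} {c b : ℝ}
    (hstep : ∀ y, ∑ i, p i * ‖y - γ t • g i y - xstar‖ ^ 2 ≤
      ‖y - xstar‖ ^ 2 - 2 * c * (f y - f xstar) + 2 * b) :
    pathExpect p (t + 1) (fun ω => ‖x (t + 1) (extendByDefault ω) - xstar‖ ^ 2) ≤
      pathExpect p t (fun ω => ‖x t (extendByDefault ω) - xstar‖ ^ 2) -
        2 * c * pathExpect p t (fun ω => f (x t (extendByDefault ω)) - f xstar) + 2 * b := by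
  rw [pathExpect_succ]
  simp only [sgd_iterate_snoc hx0 hrec]
  refine (pathExpect_mono hp0 fun ω => hstep _).trans_eq ?_
  rw [pathExpect_add, pathExpect_sub, pathExpect_const_mul, pathExpect_const hp1]

theorem sgd_quasar_convex_general_step_general
    {E : Type*} [NormedAddCommGroup E] [InnerProductSpace ℝ E]
    {ι : Type*} [Fintype ι] [Inhabited ι] (p : ι → ℝ)
    (hp0 : ∀ i, 0 ≤ p i) (hp1 : ∑ i, p i = 1)
    (f : E → ℝ) (gradf : E → E) (g : ι → E → E)
    (L ζ ρ σ2 : ℝ) (γ : ℕ → ℝ) (xstar x0 : E)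
    (hL : 0 < L) (hζ0 : 0 < ζ)
    (hsmooth : ∀ x z : E, f z ≤ f x + ⟪gradf x, z - x⟫ + L / 2 * ‖z - x‖ ^ 2)
    (hquasar : ∀ x : E, f xstar ≥ f x + (1 / ζ) * ⟪gradf x, xstar - x⟫)
    (hmin : ∀ x, f xstar ≤ f x)
    (hunbiased : ∀ x : E, ∑ i, p i • g i x = gradf x)
    (hER : ∀ x : E, (∑ i, p i * ‖g i x - g i xstar - (gradf x - gradf xstar)‖ ^ 2) ≤
        2 * ρ * (f x - f xstar))
    (hσ : (∑ i, p i * ‖g i xstar‖ ^ 2) = σ2)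
    (hγ : ∀ t, 0 < γ t ∧ γ t < ζ / (2 * ρ + L))
    (x : ℕ → (ℕ → ι) → E)
    (hx0 : ∀ ω, x 0 ω = x0)
    (hrec : ∀ k ω, x (k + 1) ω = x k ω - γ k • g (ω k) (x k ω)) :
    ∀ k : ℕ, 0 < k → ∃ t < k,
      (∑ ω : Fin t → ι, (∏ s, p (ω s)) *
          (f (x t (fun m => if h : m < t then ω ⟨m, h⟩ else default)) - f xstar)) ≤
        (‖x0 - xstar‖ ^ 2 / 2 + σ2 * ∑ t ∈ Finset.range k, (γ t) ^ 2) /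
          (∑ t ∈ Finset.range k, γ t * (ζ - γ t * (2 * ρ + L))) := by
  intro k hk
  have hA : 0 < 2 * ρ + L := (div_pos_iff_of_pos_left hζ0).mp ((hγ 0).1.trans (hγ 0).2)
  have hc : ∀ t, 0 < γ t * (ζ - γ t * (2 * ρ + L)) := fun t =>
    mul_pos (hγ t).1 (sub_pos.mpr ((lt_div_iff₀ hA).mp (hγ t).2))
  have hgrad0 := grad_eq_zero_of_smooth_of_forall_le hL hsmooth hmin
  have hstep : ∀ t y, ∑ i, p i * ‖y - γ t • g i y - xstar‖ ^ 2 ≤ ‖y - xstar‖ ^ 2 -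
      2 * (γ t * (ζ - γ t * (2 * ρ + L))) * (f y - f xstar) + 2 * (σ2 * γ t ^ 2) := by
    intro t y
    have hsecond := sum_mul_norm_sq_le_of_expectedResidual hp0 hp1 hgrad0 (hunbiased y)
      (norm_sq_grad_le_of_smooth hL hsmooth hmin y) (hER y) hσ
    have h := sum_mul_norm_sgdStep_sub_sq_le (γ := γ t) hp1 (hγ t).1.le (hunbiased y)
      (mul_sub_le_inner_of_quasarConvex hζ0 (hquasar y)) hsecond
    linarith
  obtain ⟨t, htk, ht⟩ := exists_lt_le_div_of_descent
    (R := fun t => pathExpect p t fun ω => ‖x t (extendByDefault ω) - xstar‖ ^ 2)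
    (F := fun t => pathExpect p t fun ω => f (x t (extendByDefault ω)) - f xstar)
    (b := fun t => σ2 * γ t ^ 2)
    (fun t => pathExpect_nonneg hp0 fun ω => sq_nonneg _) hc
    (fun t => pathExpect_sgd_norm_sub_sq_succ_le hp0 hp1 hx0 hrec (hstep t)) hk
  have hR0 : pathExpect p 0 (fun ω => ‖x 0 (extendByDefault ω) - xstar‖ ^ 2) =
      ‖x0 - xstar‖ ^ 2 := by
    simp only [hx0]
    exact pathExpect_const hp1 0 _
  rw [hR0, ← mul_sum] at ht
  -- `ht` is the goal once `pathExpect` and `extendByDefault` are unfolded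
  exact ⟨t, htk, ht⟩

/-- SGD on an `L`-smooth, `ζ`-quasar-convex function under the Expected Residual condition,
with step sizes `0 < γ_t < ζ/(2ρ + L)`:
`min_{t<k} E[f(x^t) - f(x*)] ≤ (‖x⁰-x*‖²/2 + σ²∑_{t<k}γ_t²) / ∑_{t<k}γ_t(ζ - γ_t(2ρ+L))`. -/
theorem sgd_quasar_convex_general_step
    {E : Type*} [NormedAddCommGroup E] [InnerProductSpace ℝ E]
    {ι : Type*} [Fintype ι] [Inhabited ι] (p : ι → ℝ)
    (hp0 : ∀ i, 0 ≤ p i) (hp1 : ∑ i, p i = 1)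
    (f : E → ℝ) (gradf : E → E) (g : ι → E → E)
    (L ζ ρ σ2 : ℝ) (γ : ℕ → ℝ) (xstar x0 : E)
    (hL : 0 < L) (hζ0 : 0 < ζ) (hζ1 : ζ ≤ 1) (hρ : 0 ≤ ρ)
    (hsmooth : ∀ x z : E, f z ≤ f x + ⟪gradf x, z - x⟫ + L / 2 * ‖z - x‖ ^ 2)
    (hquasar : ∀ x : E, f xstar ≥ f x + (1 / ζ) * ⟪gradf x, xstar - x⟫)
    (hmin : ∀ x, f xstar ≤ f x)
    (hunbiased : ∀ x : E, ∑ i, p i • g i x = gradf x)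
    (hER : ∀ x : E, (∑ i, p i * ‖g i x - g i xstar - (gradf x - gradf xstar)‖ ^ 2) ≤
        2 * ρ * (f x - f xstar))
    (hσ : (∑ i, p i * ‖g i xstar‖ ^ 2) = σ2)
    (hγ : ∀ t, 0 < γ t ∧ γ t < ζ / (2 * ρ + L))
    (x : ℕ → (ℕ → ι) → E)
    (hx0 : ∀ ω, x 0 ω = x0)
    (hrec : ∀ k ω, x (k + 1) ω = x k ω - γ k • g (ω k) (x k ω)) :
    ∀ k : ℕ, 0 < k → ∃ t < k,
      (∑ ω : Fin t → ι, (∏ s, p (ω s)) *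
          (f (x t (fun m => if h : m < t then ω ⟨m, h⟩ else default)) - f xstar)) ≤
        (‖x0 - xstar‖ ^ 2 / 2 + σ2 * ∑ t ∈ Finset.range k, (γ t) ^ 2) /
          (∑ t ∈ Finset.range k, γ t * (ζ - γ t * (2 * ρ + L))) :=
  sgd_quasar_convex_general_step_general p hp0 hp1 f gradf g L ζ ρ σ2 γ xstar x0 hL hζ0 hsmooth
    hquasar hmin hunbiased hER hσ hγ x hx0 hrec
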